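/- Let $V$ be a real vector space with endomorphisms $I, J$ satisfying $I^2 = J^2 = -\mathrm{id}$ and $IJ = -JI$, and set $K = IJ$. Let $S \subseteq V$ be a subspace with $J(S) \subseteq S$ such that $V = S \oplus I(S)$ (internal direct sum), and let $\pi : V \to S$ be the projection along $I(S)$. Then for every $X, Y \in S$ and every linear functional $\gamma : V \to \mathbb{R}$, $\pi\big(\langle X,\gamma\rangle^q(Y)\big) = \tfrac{1}{2}\big(\gamma(X)Y + \gamma(Y)X - \gamma(JX)JY - \gamma(JY)JX\big)$, where $\langle X,\gamma\rangle^q(Y) = \tfrac{1}{2}\big(\gamma(X)Y + \gamma(Y)X - \sum_{A \in \{I,J,K\}}(\gamma(AX)AY + \gamma(AY)AX)\big)$. -/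

import Mathlib

theorem stmt7_general (V : Type*) [AddCommGroup V] [Module ℝ V]
    (I J : V →ₗ[ℝ] V) (K : V →ₗ[ℝ] V) (hK : K = I ∘ₗ J)
    (S : Submodule ℝ V) (hJS : ∀ x ∈ S, J x ∈ S)
    (π : V →ₗ[ℝ] V) (hπS : ∀ x ∈ S, π x = x) (hπI : ∀ x ∈ S, π (I x) = 0)
    (X Y : V) (hX : X ∈ S) (hY : Y ∈ S) (γ : V →ₗ[ℝ] ℝ) :
    π ((1 / 2 : ℝ) • (γ X • Y + γ Y • X -
        (γ (I X) • I Y + γ (I Y) • I X + γ (J X) • J Y + γ (J Y) • J X +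
          γ (K X) • K Y + γ (K Y) • K X))) =
      (1 / 2 : ℝ) • (γ X • Y + γ Y • X - (γ (J X) • J Y + γ (J Y) • J X)) := by
  have hπK : ∀ x ∈ S, π (K x) = 0 := fun x hx => by
    rw [hK, LinearMap.comp_apply]
    exact hπI _ (hJS x hx)
  simp only [map_smul, map_add, map_sub, hπI X hX, hπI Y hY, hπK X hX, hπK Y hY,
    hπS X hX, hπS Y hY, hπS _ (hJS X hX), hπS _ (hJS Y hY), smul_zero, add_zero, zero_add]

/-- Derivation of equation (3) in §1.2: for anticommuting complex structures `I, J` with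
`K = IJ`, a `J`-invariant subspace `S` with `V = S ⊕ I(S)`, and `π` the projection onto
`S` along `I(S)`, the projection of the quaternionic algebraic bracket of `X, Y ∈ S` and
`γ` equals the c-projective algebraic bracket. -/
theorem stmt7 (V : Type*) [AddCommGroup V] [Module ℝ V]
    (I J : V →ₗ[ℝ] V) (hI : I ∘ₗ I = -LinearMap.id) (hJ : J ∘ₗ J = -LinearMap.id)
    (hIJ : I ∘ₗ J = -(J ∘ₗ I)) (K : V →ₗ[ℝ] V) (hK : K = I ∘ₗ J)
    (S : Submodule ℝ V) (hJS : ∀ x ∈ S, J x ∈ S)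
    (hdisj : S ⊓ S.map I = ⊥) (hsup : S ⊔ S.map I = ⊤)
    (π : V →ₗ[ℝ] V) (hπS : ∀ x ∈ S, π x = x) (hπI : ∀ x ∈ S, π (I x) = 0)
    (X Y : V) (hX : X ∈ S) (hY : Y ∈ S) (γ : V →ₗ[ℝ] ℝ) :
    π ((1 / 2 : ℝ) • (γ X • Y + γ Y • X -
        (γ (I X) • I Y + γ (I Y) • I X + γ (J X) • J Y + γ (J Y) • J X +
          γ (K X) • K Y + γ (K Y) • K X))) =
      (1 / 2 : ℝ) • (γ X • Y + γ Y • X - (γ (J X) • J Y + γ (J Y) • J X)) :=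
  stmt7_general V I J K hK S hJS π hπS hπI X Y hX hY γ
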